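/- arXiv:2005.07417 — 2 statements merged into one kernel-verified Lean document; each statement's English description precedes it below -/
import Mathlib

section
/- For every integer $k\ge2$ one has $\psi_k\le\psi_1$ on $[0,R]$; in particular $\psi_k(r^*)\le\psi_1(r^*)$, i.e. $\omega_k\ge\omega_1$ where $\omega_k:=-u_*'(r^*)-\psi_k(r^*)$. -/
/-! With `u > 0` solving the radial equation, the Wronskian `W = r (u h' - h u')` of a
supersolution `h` decreases strictly wherever `h < 0`, and `(h / u)' = W / (r u²)`. On a maximal
interval `(a, b)` where `h < 0`, the value `h a ≥ 0` forces `W < 0` (otherwise `h / u` would rise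
from a nonnegative value to a negative one), and across the interface the downward jump of `h'`
keeps `W < 0`. Then `h / u` decreases towards `b`, impossible if `b < R` as `h b ≥ 0`; if `b = R`,
`u h' < 0` near `R` because `h u' → 0`, so `h` cannot climb back to `h R = 0`. This applies to
`h = ψ_k`, where `(r h')' + r q h = k² ψ_k / r`, and then to `h = ψ_1 - ψ_k`, where it is
`(ψ_1 - k² ψ_k) / r`, negative wherever `ψ_1 < ψ_k` since `ψ_k ≥ 0`. -/

open Set

noncomputable section

/-- The radial profile `u_*` of the first Dirichlet eigenfunction of
`-Δ - χ_{B(0,r*)}` on the disc `B(0,R) ⊂ ℝ²`, with derivative `u'` and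
eigenvalue `lam`: `u_*` is `C¹` on `[0,R]`, positive on `[0,R)`, satisfies
`-(1/r)(r u')' = (lam + χ_{[0,r*)}) u` on `(0,R)` (away from the interface `r*`),
`u'(0) = 0`, `u(R) = 0`, and `u' < 0` on `(0,R]`. -/
structure EigenProfile (R rs lam : ℝ) (u u' : ℝ → ℝ) : Prop where
  cont : ContinuousOn u (Icc 0 R)
  deriv : ∀ r ∈ Icc (0 : ℝ) R, HasDerivWithinAt u (u' r) (Icc 0 R) r
  derivCont : ContinuousOn u' (Icc 0 R)
  pos : ∀ r ∈ Ico (0 : ℝ) R, 0 < u r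
  ode : ∀ r ∈ Ioo (0 : ℝ) R, r ≠ rs →
    HasDerivAt (fun s => s * u' s)
      (-(r * ((lam + (if r < rs then (1 : ℝ) else 0)) * u r))) r
  deriv0 : u' 0 = 0
  valR : u R = 0
  derivNeg : ∀ r ∈ Ioc (0 : ℝ) R, u' r < 0

/-- The profile `ψ_k`: continuous on `[0,R]`, `C²` on `(0,r*)` and `(r*,R)`,
satisfying `-(1/r)(r ψ_k')' = (lam + χ_{[0,r*)} - k²/r²) ψ_k` there,
`ψ_k(0) = ψ_k(R) = 0`, and the jump of one-sided derivatives
`ψ_k'(r*⁺) - ψ_k'(r*⁻) = -u(r*)`; `dplus` and `dminus` are the one-sided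
derivatives at `r*`. -/
structure PsiProfile (R rs lam : ℝ) (u : ℝ → ℝ) (k : ℕ) (ψ ψ' : ℝ → ℝ)
    (dplus dminus : ℝ) : Prop where
  cont : ContinuousOn ψ (Icc 0 R)
  deriv : ∀ r ∈ Ioo (0 : ℝ) R, r ≠ rs → HasDerivAt ψ (ψ' r) r
  ode : ∀ r ∈ Ioo (0 : ℝ) R, r ≠ rs →
    HasDerivAt (fun s => s * ψ' s)
      (-(r * ((lam + (if r < rs then (1 : ℝ) else 0) - (k : ℝ) ^ 2 / r ^ 2) * ψ r))) r
  val0 : ψ 0 = 0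
  valR : ψ R = 0
  jumpPlus : HasDerivWithinAt ψ dplus (Ioi rs) rs
  jumpMinus : HasDerivWithinAt ψ dminus (Iio rs) rs
  jump : dplus - dminus = -(u rs)

open Filter Topology

theorem exists_Ioc_neg_of_neg {f : ℝ → ℝ} {x c : ℝ} (hf : ContinuousOn f (Icc x c))
    (hxc : x ≤ c) (hx : 0 ≤ f x) (hc : f c < 0) :
    ∃ a ∈ Ico x c, 0 ≤ f a ∧ ∀ r ∈ Ioc a c, f r < 0 := by
  set S := Icc x c ∩ f ⁻¹' Ici 0
  have hS : IsCompact S := isCompact_Icc.of_isClosed_subset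
    (hf.preimage_isClosed_of_isClosed isClosed_Icc isClosed_Ici) inter_subset_left
  have haS : sSup S ∈ S := hS.sSup_mem ⟨x, ⟨le_rfl, hxc⟩, hx⟩
  refine ⟨sSup S, ⟨haS.1.1, haS.1.2.lt_of_ne fun h => ?_⟩, haS.2, fun r hr => ?_⟩
  · exact (h ▸ hc).not_ge haS.2
  · by_contra! hr0
    exact hr.1.not_ge (le_csSup hS.bddAbove ⟨⟨haS.1.1.trans hr.1.le, hr.2⟩, hr0⟩)

theorem exists_Ico_neg_of_neg {f : ℝ → ℝ} {c y : ℝ} (hf : ContinuousOn f (Icc c y))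
    (hcy : c ≤ y) (hy : 0 ≤ f y) (hc : f c < 0) :
    ∃ b ∈ Ioc c y, 0 ≤ f b ∧ ∀ r ∈ Ico c b, f r < 0 := by
  set S := Icc c y ∩ f ⁻¹' Ici 0
  have hS : IsCompact S := isCompact_Icc.of_isClosed_subset
    (hf.preimage_isClosed_of_isClosed isClosed_Icc isClosed_Ici) inter_subset_left
  have hbS : sInf S ∈ S := hS.sInf_mem ⟨y, ⟨hcy, le_rfl⟩, hy⟩
  refine ⟨sInf S, ⟨hbS.1.1.lt_of_ne fun h => ?_, hbS.1.2⟩, hbS.2, fun r hr => ?_⟩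
  · exact (h ▸ hc).not_ge hbS.2
  · by_contra! hr0
    exact hr.2.not_ge (csInf_le hS.bddBelow ⟨⟨hr.1, hr.2.le.trans hbS.1.2⟩, hr0⟩)

theorem exists_Ioo_neg_of_neg {f : ℝ → ℝ} {x y c : ℝ} (hf : ContinuousOn f (Icc x y))
    (hx : 0 ≤ f x) (hy : 0 ≤ f y) (hc : c ∈ Icc x y) (hfc : f c < 0) :
    ∃ a b, x ≤ a ∧ a < b ∧ b ≤ y ∧ 0 ≤ f a ∧ 0 ≤ f b ∧ ∀ r ∈ Ioo a b, f r < 0 := by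
  obtain ⟨a, ha, hfa, hleft⟩ :=
    exists_Ioc_neg_of_neg (hf.mono (Icc_subset_Icc_right hc.2)) hc.1 hx hfc
  obtain ⟨b, hb, hfb, hright⟩ :=
    exists_Ico_neg_of_neg (hf.mono (Icc_subset_Icc_left hc.1)) hc.2 hy hfc
  refine ⟨a, b, ha.1, ha.2.trans hb.1, hb.2, hfa, hfb, fun r hr => ?_⟩
  rcases le_total r c with hrc | hcr
  exacts [hleft r ⟨hr.1, hrc⟩, hright r ⟨hcr, hr.2⟩]

theorem exists_mem_Ioo_forall_Ico_ne {a b : ℝ} (hab : a < b) (c : ℝ) :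
    ∃ x ∈ Ioo a b, ∀ r ∈ Ico x b, r ≠ c := by
  rcases lt_or_ge c b with hcb | hbc
  · refine ⟨max ((a + b) / 2) ((c + b) / 2), ⟨lt_max_of_lt_left (by linarith),
      max_lt (by linarith) (by linarith)⟩, fun r hr => ?_⟩
    exact ((show c < (c + b) / 2 by linarith).trans_le ((le_max_right _ _).trans hr.1)).ne'
  · exact ⟨(a + b) / 2, ⟨by linarith, by linarith⟩, fun r hr => (hr.2.trans_le hbc).ne⟩

/-- `F` plays the role of `(r h')'`, so the last field says `-(r h')' > r q h` wherever `h < 0`. -/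
structure RadialSupersolution (R rs : ℝ) (q u u' h h' F : ℝ → ℝ) : Prop where
  continuousOn_u : ContinuousOn u (Icc 0 R)
  continuousOn_u' : ContinuousOn u' (Icc 0 R)
  pos_u : ∀ r ∈ Ico (0 : ℝ) R, 0 < u r
  hasDerivAt_u : ∀ r ∈ Ioo (0 : ℝ) R, HasDerivAt u (u' r) r
  hasDerivAt_mul_u' : ∀ r ∈ Ioo (0 : ℝ) R, r ≠ rs →
    HasDerivAt (fun s => s * u' s) (-(r * (q r * u r))) r
  continuousOn_h : ContinuousOn h (Icc 0 R)
  hasDerivAt_h : ∀ r ∈ Ioo (0 : ℝ) R, r ≠ rs → HasDerivAt h (h' r) r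
  hasDerivAt_mul_h' : ∀ r ∈ Ioo (0 : ℝ) R, r ≠ rs → HasDerivAt (fun s => s * h' s) (F r) r
  supersolution : ∀ r ∈ Ioo (0 : ℝ) R, r ≠ rs → h r < 0 → F r + r * (q r * h r) < 0

def radialWronskian (u u' h h' : ℝ → ℝ) (r : ℝ) : ℝ :=
  u r * (r * h' r) - h r * (r * u' r)

namespace RadialSupersolution

variable {R rs : ℝ} {q u u' h h' F : ℝ → ℝ}

theorem hasDerivAt_radialWronskian (H : RadialSupersolution R rs q u u' h h' F) {r : ℝ}
    (hr : r ∈ Ioo 0 R) (hrs : r ≠ rs) :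
    HasDerivAt (radialWronskian u u' h h') (u r * (F r + r * (q r * h r))) r := by
  refine (((H.hasDerivAt_u r hr).mul (H.hasDerivAt_mul_h' r hr hrs)).sub
    ((H.hasDerivAt_h r hr hrs).mul (H.hasDerivAt_mul_u' r hr hrs))).congr_deriv ?_
  ring

theorem strictAntiOn_radialWronskian (H : RadialSupersolution R rs q u u' h h' F) {D : Set ℝ}
    (hD : Convex ℝ D) (hDsub : ∀ r ∈ D, r ∈ Ioo 0 R ∧ r ≠ rs ∧ h r < 0) :
    StrictAntiOn (radialWronskian u u' h h') D := by
  refine strictAntiOn_of_deriv_neg hD (fun r hr => ?_) fun r hr => ?_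
  · obtain ⟨hr, hrs, -⟩ := hDsub r hr
    exact (H.hasDerivAt_radialWronskian hr hrs).continuousAt.continuousWithinAt
  · obtain ⟨hr, hrs, hneg⟩ := hDsub r (interior_subset hr)
    rw [(H.hasDerivAt_radialWronskian hr hrs).deriv]
    exact mul_neg_of_pos_of_neg (H.pos_u r ⟨hr.1.le, hr.2⟩) (H.supersolution r hr hrs hneg)

theorem hasDerivAt_div (H : RadialSupersolution R rs q u u' h h' F) {r : ℝ}
    (hr : r ∈ Ioo 0 R) (hrs : r ≠ rs) :
    HasDerivAt (fun s => h s / u s) (radialWronskian u u' h h' r / (r * u r ^ 2)) r := by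
  have hu : u r ≠ 0 := (H.pos_u r ⟨hr.1.le, hr.2⟩).ne'
  refine ((H.hasDerivAt_h r hr hrs).div (H.hasDerivAt_u r hr) hu).congr_deriv ?_
  rw [radialWronskian]
  field_simp [hr.1.ne']

theorem continuousOn_div (H : RadialSupersolution R rs q u u' h h' F) {D : Set ℝ}
    (hD : D ⊆ Ico 0 R) : ContinuousOn (fun s => h s / u s) D :=
  (H.continuousOn_h.mono (hD.trans Ico_subset_Icc_self)).div
    (H.continuousOn_u.mono (hD.trans Ico_subset_Icc_self)) fun r hr => (H.pos_u r (hD hr)).ne'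

theorem strictMonoOn_div (H : RadialSupersolution R rs q u u' h h' F) {D : Set ℝ}
    (hD : Convex ℝ D) (hDsub : D ⊆ Ico 0 R)
    (hW : ∀ r ∈ interior D, r ≠ rs ∧ 0 < radialWronskian u u' h h' r) :
    StrictMonoOn (fun s => h s / u s) D := by
  refine strictMonoOn_of_deriv_pos hD (H.continuousOn_div hDsub) fun r hr => ?_
  have hr' : r ∈ Ioo 0 R := interior_Ico (a := (0 : ℝ)) ▸ interior_mono hDsub hr
  rw [(H.hasDerivAt_div hr' (hW r hr).1).deriv]
  exact div_pos (hW r hr).2 (mul_pos hr'.1 (pow_pos (H.pos_u r ⟨hr'.1.le, hr'.2⟩) 2))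

theorem strictAntiOn_div (H : RadialSupersolution R rs q u u' h h' F) {D : Set ℝ}
    (hD : Convex ℝ D) (hDsub : D ⊆ Ico 0 R)
    (hW : ∀ r ∈ interior D, r ≠ rs ∧ radialWronskian u u' h h' r < 0) :
    StrictAntiOn (fun s => h s / u s) D := by
  refine strictAntiOn_of_deriv_neg hD (H.continuousOn_div hDsub) fun r hr => ?_
  have hr' : r ∈ Ioo 0 R := interior_Ico (a := (0 : ℝ)) ▸ interior_mono hDsub hr
  rw [(H.hasDerivAt_div hr' (hW r hr).1).deriv]
  exact div_neg_of_neg_of_pos (hW r hr).2 (mul_pos hr'.1 (pow_pos (H.pos_u r ⟨hr'.1.le, hr'.2⟩) 2))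

theorem radialWronskian_neg_of_forall_ne (H : RadialSupersolution R rs q u u' h h' F)
    {a ξ : ℝ} (ha : 0 ≤ a) (hha : 0 ≤ h a) (haξ : a < ξ) (hξR : ξ < R)
    (hI : ∀ r ∈ Ioc a ξ, r ≠ rs ∧ h r < 0) : radialWronskian u u' h h' ξ < 0 := by
  by_contra! hWξ
  have hWanti := H.strictAntiOn_radialWronskian (convex_Ioc a ξ) fun r hr =>
    ⟨⟨ha.trans_lt hr.1, hr.2.trans_lt hξR⟩, hI r hr⟩
  have hvmono := H.strictMonoOn_div (convex_Icc a ξ)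
    (fun r hr => ⟨ha.trans hr.1, hr.2.trans_lt hξR⟩) fun r hr => by
      rw [interior_Icc] at hr
      exact ⟨(hI r (Ioo_subset_Ioc_self hr)).1,
        hWξ.trans_lt (hWanti (Ioo_subset_Ioc_self hr) (right_mem_Ioc.2 haξ) hr.2)⟩
  have hva : 0 ≤ h a / u a := div_nonneg hha (H.pos_u a ⟨ha, haξ.trans hξR⟩).le
  have hvξ : h ξ / u ξ < 0 := div_neg_of_neg_of_pos (hI ξ (right_mem_Ioc.2 haξ)).2
    (H.pos_u ξ ⟨ha.trans haξ.le, hξR⟩)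
  linarith [hvmono (left_mem_Icc.2 haξ.le) (right_mem_Icc.2 haξ.le) haξ]

theorem nonpos_of_hasDerivWithinAt_div_Iio (H : RadialSupersolution R rs q u u' h h' F)
    {a d : ℝ} (ha : 0 ≤ a) (hars : a < rs) (hrsR : rs < R)
    (hW : ∀ r ∈ Ioo a rs, radialWronskian u u' h h' r < 0)
    (hv : HasDerivWithinAt (fun s => h s / u s) d (Iio rs) rs) : d ≤ 0 := by
  have hvanti := H.strictAntiOn_div (convex_Ioc a rs)
    (fun r hr => ⟨ha.trans hr.1.le, hr.2.trans_lt hrsR⟩) fun r hr => by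
      rw [interior_Ioc] at hr
      exact ⟨hr.2.ne, hW r hr⟩
  refine le_of_tendsto ((hasDerivWithinAt_iff_tendsto_slope' self_notMem_Iio).mp hv) ?_
  filter_upwards [Ioo_mem_nhdsLT hars] with r hr
  exact hvanti.antitoneOn.slope_nonpos (right_mem_Ioc.2 hars) (Ioo_subset_Ioc_self hr)

theorem pos_of_hasDerivWithinAt_div_Ioi (H : RadialSupersolution R rs q u u' h h' F)
    {ξ d : ℝ} (hrs : 0 < rs) (hrsξ : rs < ξ) (hξR : ξ < R) (hneg : ∀ r ∈ Ioc rs ξ, h r < 0)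
    (hWξ : 0 ≤ radialWronskian u u' h h' ξ)
    (hv : HasDerivWithinAt (fun s => h s / u s) d (Ioi rs) rs) : 0 < d := by
  set W := radialWronskian u u' h h'
  obtain ⟨σ, hσ⟩ : ∃ σ, σ ∈ Ioo rs ξ := nonempty_Ioo.2 hrsξ
  have hWanti := H.strictAntiOn_radialWronskian (convex_Ioc rs ξ) fun r hr =>
    ⟨⟨hrs.trans hr.1, hr.2.trans_lt hξR⟩, hr.1.ne', hneg r hr⟩
  have hWσ : 0 < W σ :=
    hWξ.trans_lt (hWanti (Ioo_subset_Ioc_self hσ) (right_mem_Ioc.2 hrsξ) hσ.2)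
  have hσR : σ ∈ Ioo 0 R := ⟨hrs.trans hσ.1, hσ.2.trans hξR⟩
  obtain ⟨M, hM⟩ := isCompact_Icc.bddAbove_image (f := fun s => s * u s ^ 2)
    (continuousOn_id.mul (H.continuousOn_u.pow 2))
  have hMpos : 0 < M := (mul_pos hσR.1 (pow_pos (H.pos_u σ ⟨hσR.1.le, hσR.2⟩) 2)).trans_le
    (hM ⟨σ, Ioo_subset_Icc_self hσR, rfl⟩)
  -- `(h / u)' = W / (r u²) ≥ W σ / M` on `(rs, σ)`, so the right slopes at `rs` stay above it
  have hderiv : ∀ ζ ∈ Ioo rs σ, HasDerivAt (fun s => h s / u s) (W ζ / (ζ * u ζ ^ 2)) ζ ∧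
      W σ / M ≤ W ζ / (ζ * u ζ ^ 2) := by
    intro ζ hζ
    have hζR : ζ ∈ Ioo 0 R := ⟨hrs.trans hζ.1, hζ.2.trans hσR.2⟩
    have hWζ : W σ < W ζ :=
      hWanti ⟨hζ.1, hζ.2.le.trans hσ.2.le⟩ (Ioo_subset_Ioc_self hσ) hζ.2
    exact ⟨H.hasDerivAt_div hζR hζ.1.ne', div_le_div₀ (hWσ.trans hWζ).le hWζ.le
      (mul_pos hζR.1 (pow_pos (H.pos_u ζ ⟨hζR.1.le, hζR.2⟩) 2))
      (hM ⟨ζ, Ioo_subset_Icc_self hζR, rfl⟩)⟩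
  have hslope : ∀ r ∈ Ioo rs σ, W σ / M ≤ slope (fun s => h s / u s) rs r := by
    intro r hr
    obtain ⟨ζ, hζ, hζeq⟩ := exists_hasDerivAt_eq_slope (fun s => h s / u s)
      (fun ζ => W ζ / (ζ * u ζ ^ 2)) hr.1
      (H.continuousOn_div fun s hs => ⟨hrs.le.trans hs.1, hs.2.trans_lt (hr.2.trans hσR.2)⟩)
      fun ζ hζ => (hderiv ζ ⟨hζ.1, hζ.2.trans hr.2⟩).1
    rw [slope_def_field, ← hζeq]
    exact (hderiv ζ ⟨hζ.1, hζ.2.trans hr.2⟩).2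
  refine (div_pos hWσ hMpos).trans_le
    (ge_of_tendsto ((hasDerivWithinAt_iff_tendsto_slope' self_notMem_Ioi).mp hv) ?_)
  filter_upwards [Ioo_mem_nhdsGT hσ.1] with r hr using hslope r hr

theorem radialWronskian_neg_of_jump (H : RadialSupersolution R rs q u u' h h' F)
    {a ξ dp dm : ℝ} (ha : 0 ≤ a) (hars : a < rs) (hrsξ : rs < ξ) (hξR : ξ < R)
    (hneg : ∀ r ∈ Ioc rs ξ, h r < 0) (hW : ∀ r ∈ Ioo a rs, radialWronskian u u' h h' r < 0)
    (hp : HasDerivWithinAt h dp (Ioi rs) rs) (hm : HasDerivWithinAt h dm (Iio rs) rs)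
    (hjump : dp ≤ dm) : radialWronskian u u' h h' ξ < 0 := by
  by_contra! hWξ
  have hrs : rs ∈ Ioo 0 R := ⟨ha.trans_lt hars, hrsξ.trans hξR⟩
  have hu : 0 < u rs := H.pos_u rs ⟨hrs.1.le, hrs.2⟩
  have hright := H.pos_of_hasDerivWithinAt_div_Ioi hrs.1 hrsξ hξR hneg hWξ
    (hp.div (H.hasDerivAt_u rs hrs).hasDerivWithinAt hu.ne')
  have hleft := H.nonpos_of_hasDerivWithinAt_div_Iio ha hars hrs.2 hW
    (hm.div (H.hasDerivAt_u rs hrs).hasDerivWithinAt hu.ne')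
  have : (dp * u rs - h rs * u' rs) / u rs ^ 2 ≤ (dm * u rs - h rs * u' rs) / u rs ^ 2 := by
    gcongr
  linarith

theorem eventually_deriv_neg (H : RadialSupersolution R rs q u u' h h' F) {r₁ : ℝ}
    (hr₁ : 0 < r₁) (hr₁R : r₁ < R) (hI : ∀ r ∈ Ico r₁ R, r ≠ rs ∧ h r < 0)
    (hW : radialWronskian u u' h h' r₁ < 0) (hR : h R = 0) : ∀ᶠ r in 𝓝[<] R, h' r < 0 := by
  have hWanti := H.strictAntiOn_radialWronskian (convex_Ico r₁ R) fun r hr =>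
    ⟨⟨hr₁.trans_le hr.1, hr.2⟩, hI r hr⟩
  -- `h r · r u'(r) → 0`, so near `R` the sign of `u · r h' = W + h · r u'` is that of `W`
  have htend : Tendsto (fun r => h r * (r * u' r)) (𝓝[<] R) (𝓝 0) := by
    have hcont : ContinuousWithinAt (fun r => h r * (r * u' r)) (Icc 0 R) R :=
      (H.continuousOn_h.mul (continuousOn_id.mul H.continuousOn_u')) R
        (right_mem_Icc.2 (hr₁.trans hr₁R).le)
    rw [← nhdsWithin_Ioo_eq_nhdsLT (hr₁.trans hr₁R)]
    simpa [hR] using hcont.tendsto.mono_left (nhdsWithin_mono _ Ioo_subset_Icc_self)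
  filter_upwards [Ioo_mem_nhdsLT hr₁R, htend.eventually (gt_mem_nhds (neg_pos.2 hW))]
    with r hr hsmall
  have hWr := hWanti (left_mem_Ico.2 hr₁R) (Ioo_subset_Ico_self hr) hr.1
  have hu := H.pos_u r ⟨(hr₁.trans hr.1).le, hr.2⟩
  by_contra! hh'
  have := mul_nonneg hu.le (mul_nonneg (hr₁.trans hr.1).le hh')
  simp only [radialWronskian] at hWr hsmall
  linarith

theorem false_of_radialWronskian_neg (H : RadialSupersolution R rs q u u' h h' F) {r₁ b : ℝ}
    (hr₁ : 0 < r₁) (hr₁b : r₁ < b) (hbR : b ≤ R) (hhb : 0 ≤ h b) (hR : h R = 0)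
    (hI : ∀ r ∈ Ico r₁ b, r ≠ rs ∧ h r < 0) (hW : radialWronskian u u' h h' r₁ < 0) :
    False := by
  rcases hbR.lt_or_eq with hbR | rfl
  · have hWanti := H.strictAntiOn_radialWronskian (convex_Ico r₁ b) fun r hr =>
      ⟨⟨hr₁.trans_le hr.1, hr.2.trans hbR⟩, hI r hr⟩
    have hvanti := H.strictAntiOn_div (convex_Icc r₁ b)
      (fun r hr => ⟨hr₁.le.trans hr.1, hr.2.trans_lt hbR⟩) fun r hr => by
        rw [interior_Icc] at hr
        exact ⟨(hI r (Ioo_subset_Ico_self hr)).1,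
          (hWanti (left_mem_Ico.2 hr₁b) (Ioo_subset_Ico_self hr) hr.1).trans hW⟩
    have hv₁ : h r₁ / u r₁ < 0 := div_neg_of_neg_of_pos (hI r₁ (left_mem_Ico.2 hr₁b)).2
      (H.pos_u r₁ ⟨hr₁.le, hr₁b.trans hbR⟩)
    have hvb : 0 ≤ h b / u b := div_nonneg hhb (H.pos_u b ⟨hr₁.le.trans hr₁b.le, hbR⟩).le
    linarith [hvanti (left_mem_Icc.2 hr₁b.le) (right_mem_Icc.2 hr₁b.le) hr₁b]
  · obtain ⟨l, hl, hsub⟩ :=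
      mem_nhdsLT_iff_exists_Ioo_subset.mp (H.eventually_deriv_neg hr₁ hr₁b hI hW hR)
    obtain ⟨m, hm⟩ : ∃ m, m ∈ Ioo (max l r₁) b := nonempty_Ioo.2 (max_lt hl hr₁b)
    have hmr₁ : r₁ < m := (le_max_right l r₁).trans_lt hm.1
    have hanti : StrictAntiOn h (Icc m b) := by
      refine strictAntiOn_of_deriv_neg (convex_Icc m b)
        (H.continuousOn_h.mono (Icc_subset_Icc_left (hr₁.trans hmr₁).le)) fun r hr => ?_
      rw [interior_Icc] at hr
      rw [(H.hasDerivAt_h r ⟨hr₁.trans (hmr₁.trans hr.1), hr.2⟩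
        (hI r ⟨(hmr₁.trans hr.1).le, hr.2⟩).1).deriv]
      exact hsub ⟨(le_max_left l r₁).trans_lt (hm.1.trans hr.1), hr.2⟩
    have hhm := (hI m ⟨hmr₁.le, hm.2⟩).2
    linarith [hanti (left_mem_Icc.2 hm.2.le) (right_mem_Icc.2 hm.2.le) hm.2]

theorem nonneg (H : RadialSupersolution R rs q u u' h h' F) {dp dm : ℝ}
    (hp : HasDerivWithinAt h dp (Ioi rs) rs) (hm : HasDerivWithinAt h dm (Iio rs) rs)
    (hjump : dp ≤ dm) (h0 : 0 ≤ h 0) (hR : h R = 0) : ∀ r ∈ Icc 0 R, 0 ≤ h r := by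
  by_contra! ⟨c, hc, hhc⟩
  obtain ⟨a, b, ha, hab, hbR, hha, hhb, hneg⟩ :=
    exists_Ioo_neg_of_neg H.continuousOn_h h0 hR.ge hc hhc
  have hanchor : ∀ ξ ∈ Ioo a b, (∀ r ∈ Ioc a ξ, r ≠ rs) → radialWronskian u u' h h' ξ < 0 :=
    fun ξ hξ hfree => H.radialWronskian_neg_of_forall_ne ha hha hξ.1 (hξ.2.trans_le hbR)
      fun r hr => ⟨hfree r hr, hneg r ⟨hr.1, hr.2.trans_lt hξ.2⟩⟩
  have hW : ∀ ξ ∈ Ioo a b, ξ ≠ rs → radialWronskian u u' h h' ξ < 0 := by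
    intro ξ hξ hξrs
    by_cases hcross : a < rs ∧ rs < ξ
    · exact H.radialWronskian_neg_of_jump ha hcross.1 hcross.2 (hξ.2.trans_le hbR)
        (fun r hr => hneg r ⟨hcross.1.trans hr.1, hr.2.trans_lt hξ.2⟩)
        (fun r hr => hanchor r ⟨hr.1, hr.2.trans (hcross.2.trans hξ.2)⟩
          fun s hs => (hs.2.trans_lt hr.2).ne)
        hp hm hjump
    · refine hanchor ξ hξ ?_
      rintro r hr rfl
      exact hcross ⟨hr.1, hr.2.lt_of_ne hξrs.symm⟩
  obtain ⟨r₁, hr₁, hfree⟩ := exists_mem_Ioo_forall_Ico_ne hab rs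
  exact H.false_of_radialWronskian_neg (ha.trans_lt hr₁.1) hr₁.2 hbR hhb hR
    (fun r hr => ⟨hfree r hr, hneg r ⟨hr₁.1.trans_le hr.1, hr.2⟩⟩)
    (hW r₁ hr₁ (hfree r₁ (left_mem_Ico.2 hr₁.2)))

end RadialSupersolution

theorem EigenProfile.radialSupersolution {R rs lam : ℝ} {u u' h h' F : ℝ → ℝ}
    (hu : EigenProfile R rs lam u u') (hh : ContinuousOn h (Icc 0 R))
    (hh' : ∀ r ∈ Ioo (0 : ℝ) R, r ≠ rs → HasDerivAt h (h' r) r)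
    (hF : ∀ r ∈ Ioo (0 : ℝ) R, r ≠ rs → HasDerivAt (fun s => s * h' s) (F r) r)
    (hsup : ∀ r ∈ Ioo (0 : ℝ) R, r ≠ rs → h r < 0 →
      F r + r * ((lam + if r < rs then 1 else 0) * h r) < 0) :
    RadialSupersolution R rs (fun r => lam + if r < rs then 1 else 0) u u' h h' F where
  continuousOn_u := hu.cont
  continuousOn_u' := hu.derivCont
  pos_u := hu.pos
  hasDerivAt_u r hr :=
    (hu.deriv r (Ioo_subset_Icc_self hr)).hasDerivAt (Icc_mem_nhds hr.1 hr.2)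
  hasDerivAt_mul_u' := hu.ode
  continuousOn_h := hh
  hasDerivAt_h := hh'
  hasDerivAt_mul_h' := hF
  supersolution := hsup

namespace PsiProfile

variable {R rs lam : ℝ} {u u' : ℝ → ℝ}

theorem nonneg {k : ℕ} {ψ ψ' : ℝ → ℝ} {dp dm : ℝ} (hψ : PsiProfile R rs lam u k ψ ψ' dp dm)
    (hu : EigenProfile R rs lam u u') (hrs : 0 ≤ rs) (hrsR : rs < R) (hk : k ≠ 0) :
    ∀ r ∈ Icc 0 R, 0 ≤ ψ r := by
  refine (hu.radialSupersolution hψ.cont hψ.deriv hψ.ode fun r hr _ hneg => ?_).nonneg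
    hψ.jumpPlus hψ.jumpMinus ?_ hψ.val0.ge hψ.valR
  · generalize (lam + if r < rs then (1 : ℝ) else 0) = q
    have hr0 := hr.1
    have : -(r * ((q - (k : ℝ) ^ 2 / r ^ 2) * ψ r)) + r * (q * ψ r) =
        (k : ℝ) ^ 2 * ψ r / r := by
      field_simp
      ring
    rw [this]
    exact div_neg_of_neg_of_pos (mul_neg_of_pos_of_neg (by positivity) hneg) hr0
  · linarith [hψ.jump, hu.pos rs ⟨hrs, hrsR⟩]

theorem le_of_index_le {j k : ℕ} {ψj ψj' ψk ψk' : ℝ → ℝ} {dpj dmj dpk dmk : ℝ}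
    (hψj : PsiProfile R rs lam u j ψj ψj' dpj dmj)
    (hψk : PsiProfile R rs lam u k ψk ψk' dpk dmk) (hu : EigenProfile R rs lam u u')
    (hrs : 0 ≤ rs) (hrsR : rs < R) (hj : 0 < j) (hjk : j ≤ k) :
    ∀ r ∈ Icc 0 R, ψk r ≤ ψj r := by
  have hψk0 := hψk.nonneg hu hrs hrsR (hj.trans_le hjk).ne'
  refine fun r hr => sub_nonneg.1 ((hu.radialSupersolution (hψj.cont.sub hψk.cont)
    (fun r hr hne => (hψj.deriv r hr hne).sub (hψk.deriv r hr hne))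
    (fun r hr hne => ((hψj.ode r hr hne).sub (hψk.ode r hr hne)).congr_of_eventuallyEq
      (.of_forall fun s => by simp only [Pi.sub_apply]; ring))
    fun r hr _ hneg => ?_).nonneg (hψj.jumpPlus.sub hψk.jumpPlus)
      (hψj.jumpMinus.sub hψk.jumpMinus) (by linarith [hψj.jump, hψk.jump])
      (by simp [hψj.val0, hψk.val0]) (by simp [hψj.valR, hψk.valR]) r hr)
  generalize (lam + if r < rs then (1 : ℝ) else 0) = q
  have hr0 := hr.1
  have hj2 : (0 : ℝ) < (j : ℝ) ^ 2 := by positivity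
  have hjk2 : (j : ℝ) ^ 2 ≤ (k : ℝ) ^ 2 := by gcongr
  simp only [Pi.sub_apply, sub_neg] at hneg ⊢
  have : -(r * ((q - (j : ℝ) ^ 2 / r ^ 2) * ψj r)) - -(r * ((q - (k : ℝ) ^ 2 / r ^ 2) * ψk r))
      + r * (q * (ψj r - ψk r)) = ((j : ℝ) ^ 2 * ψj r - (k : ℝ) ^ 2 * ψk r) / r := by
    field_simp
    ring
  rw [this]
  refine div_neg_of_neg_of_pos (sub_neg.2 ?_) hr0
  calc (j : ℝ) ^ 2 * ψj r < (j : ℝ) ^ 2 * ψk r := by gcongr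
    _ ≤ (k : ℝ) ^ 2 * ψk r := by gcongr; exact hψk0 r (Ioo_subset_Icc_self hr)

end PsiProfile

theorem psi_k_le_psi_one_general
    (R rs lam : ℝ) (hrs : 0 < rs) (hrsR : rs < R)
    (u u' : ℝ → ℝ) (hu : EigenProfile R rs lam u u')
    (ψ₁ ψ₁' : ℝ → ℝ) (dp₁ dm₁ : ℝ)
    (hψ₁ : PsiProfile R rs lam u 1 ψ₁ ψ₁' dp₁ dm₁)
    (k : ℕ) (hk : 2 ≤ k)
    (ψk ψk' : ℝ → ℝ) (dpk dmk : ℝ)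
    (hψk : PsiProfile R rs lam u k ψk ψk' dpk dmk) :
    (∀ r ∈ Icc (0 : ℝ) R, ψk r ≤ ψ₁ r) ∧
    (-(u' rs) - ψ₁ rs ≤ -(u' rs) - ψk rs) := by
  have hle := hψ₁.le_of_index_le hψk hu hrs.le hrsR one_pos (one_le_two.trans hk)
  exact ⟨hle, sub_le_sub_left (hle rs ⟨hrs.le, hrsR.le⟩) _⟩

/-- for every integer `k ≥ 2` one has `ψ_k ≤ ψ₁` on `[0,R]`;
in particular `ψ_k(r*) ≤ ψ₁(r*)`, i.e. `ω_k ≥ ω₁` where `ω_k = -u'(r*) - ψ_k(r*)`. -/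
theorem psi_k_le_psi_one
    (R rs lam : ℝ) (hR : 0 < R) (hrs : 0 < rs) (hrsR : rs < R)
    (u u' : ℝ → ℝ) (hu : EigenProfile R rs lam u u')
    (ψ₁ ψ₁' : ℝ → ℝ) (dp₁ dm₁ : ℝ)
    (hψ₁ : PsiProfile R rs lam u 1 ψ₁ ψ₁' dp₁ dm₁)
    (k : ℕ) (hk : 2 ≤ k)
    (ψk ψk' : ℝ → ℝ) (dpk dmk : ℝ)
    (hψk : PsiProfile R rs lam u k ψk ψk' dpk dmk) :
    (∀ r ∈ Icc (0 : ℝ) R, ψk r ≤ ψ₁ r) ∧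
    (-(u' rs) - ψ₁ rs ≤ -(u' rs) - ψk rs) :=
  psi_k_le_psi_one_general R rs lam hrs hrsR u u' hu ψ₁ ψ₁' dp₁ dm₁ hψ₁ k hk ψk ψk' dpk dmk hψk

end
end

section
/- There exists a constant $C>0$ such that $\omega_k\ge C$ for every integer $k\ge1$, where $\omega_k:=-u_*'(r^*)-\psi_k(r^*)$. -/
open Set

noncomputable section

/-!
`v = -u'` solves the `k = 1` mode equation, vanishes at `0`, and has at `r*` exactly the kink
`-u(r*)` of `ψ_k`; but `v(R) > 0`. Subtracting a small multiple of `v + A w`, where `w` is the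
reduction-of-order solution vanishing on `[0, r*]`, gives `Φ ≥ 0` with `Φ(R) > 0`, `Φ(r*) < v(r*)`
and a strictly steeper kink. Since `k²/r² ≥ 1/r²`, `Φ` is then a strict supersolution of every
`ψ_k`-problem, and a touching argument with the positive weight `u` gives `ψ_k(r*) ≤ Φ(r*)`:
if not, the largest `m u` (`m < 0`) below `Φ - ψ_k` on `[0, b]` touches it at an interior
point, which contradicts the kinks at `r*` and the equations elsewhere.
-/

open Filter Topology MeasureTheory

theorem IsLocalMin.le_of_hasDerivWithinAt_Iio_Ioi {f : ℝ → ℝ} {x a b : ℝ} (h : IsLocalMin f x)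
    (ha : HasDerivWithinAt f a (Iio x) x) (hb : HasDerivWithinAt f b (Ioi x) x) : a ≤ b := by
  have hmin : ∀ s : Set ℝ, ∀ᶠ y in 𝓝[s] x, f x ≤ f y := fun _ => h.filter_mono nhdsWithin_le_nhds
  have ha' := hasDerivWithinAt_iff_tendsto_slope.mp ha
  have hb' := hasDerivWithinAt_iff_tendsto_slope.mp hb
  rw [sdiff_singleton_eq_self self_notMem_Iio] at ha'
  rw [sdiff_singleton_eq_self self_notMem_Ioi] at hb'
  have ha0 : a ≤ 0 := le_of_tendsto ha' <| by
    filter_upwards [self_mem_nhdsWithin, hmin _] with y (hy : y < x) hfy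
    rw [slope_def_field]
    exact div_nonpos_of_nonneg_of_nonpos (sub_nonneg.mpr hfy) (sub_neg.mpr hy).le
  have hb0 : 0 ≤ b := ge_of_tendsto hb' <| by
    filter_upwards [self_mem_nhdsWithin, hmin _] with y (hy : x < y) hfy
    rw [slope_def_field]
    exact div_nonneg (sub_nonneg.mpr hfy) (sub_pos.mpr hy).le
  exact ha0.trans hb0

theorem IsLocalMin.nonneg_of_hasDerivAt_deriv {f f' : ℝ → ℝ} {x a : ℝ} (h : IsLocalMin f x)
    (hf : ∀ᶠ y in 𝓝 x, HasDerivAt f (f' y) y) (hf' : HasDerivAt f' a x) : 0 ≤ a := by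
  by_contra! ha
  have hf'x : f' x = 0 := h.hasDerivAt_eq_zero hf.self_of_nhds
  have hsign := eventually_nhdsWithin_sign_eq_of_deriv_neg (hf'.deriv ▸ ha) hf'x
  -- `f'` changes sign from `+` to `-` at `x`, so `x` is also a local maximum of `f`
  have hmax : IsLocalMax f x := by
    refine isLocalMax_of_sign_deriv hf.self_of_nhds.continuousAt (nhdsWithin_le_nhds ?_)
    filter_upwards [hsign, hf] with y hy hfy
    rwa [hfy.deriv]
  have hconst : ∀ᶠ y in 𝓝 x, f y = f x := by
    filter_upwards [h, hmax] with y hy hy' using le_antisymm hy' hy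
  have hzero : f' =ᶠ[𝓝 x] fun _ => 0 := by
    filter_upwards [hf, hconst.eventually_nhds] with y hy hy'
    exact hy.unique ((hasDerivAt_const y (f x)).congr_of_eventuallyEq hy')
  exact ha.ne (hf'.unique ((hasDerivAt_const x 0).congr_of_eventuallyEq hzero))

theorem hasDerivWithinAt_Ioi_of_tendsto {f f' : ℝ → ℝ} {x a : ℝ} (hf : ContinuousAt f x)
    (hd : ∀ᶠ y in 𝓝[>] x, HasDerivAt f (f' y) y) (hlim : Tendsto f' (𝓝[>] x) (𝓝 a)) :
    HasDerivWithinAt f a (Ioi x) x :=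
  (hasDerivWithinAt_Ici_of_tendsto_deriv (s := {y | HasDerivAt f (f' y) y})
    (fun _ hy => hy.differentiableAt.differentiableWithinAt) hf.continuousWithinAt hd
    (hlim.congr' (hd.mono fun _ hy => hy.deriv.symm))).Ioi_of_Ici

theorem hasDerivWithinAt_Iio_of_tendsto {f f' : ℝ → ℝ} {x a : ℝ} (hf : ContinuousAt f x)
    (hd : ∀ᶠ y in 𝓝[<] x, HasDerivAt f (f' y) y) (hlim : Tendsto f' (𝓝[<] x) (𝓝 a)) :
    HasDerivWithinAt f a (Iio x) x :=
  (hasDerivWithinAt_Iic_of_tendsto_deriv (s := {y | HasDerivAt f (f' y) y})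
    (fun _ hy => hy.differentiableAt.differentiableWithinAt) hf.continuousWithinAt hd
    (hlim.congr' (hd.mono fun _ hy => hy.deriv.symm))).Iio_of_Iic

theorem exists_isLocalMin_sub_mul {d u : ℝ → ℝ} {a b x₀ : ℝ} (hd : ContinuousOn d (Icc a b))
    (hu : ContinuousOn u (Icc a b)) (hu_pos : ∀ x ∈ Icc a b, 0 < u x) (ha : 0 ≤ d a)
    (hb : 0 ≤ d b) (hx₀ : x₀ ∈ Icc a b) (hneg : d x₀ < 0) :
    ∃ m < 0, ∃ r ∈ Ioo a b, d r = m * u r ∧ IsLocalMin (fun x => d x - m * u x) r := by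
  obtain ⟨r, hr, hmin⟩ := isCompact_Icc.exists_isMinOn ⟨x₀, hx₀⟩
    (hd.div hu fun x hx => (hu_pos x hx).ne')
  set m := d r / u r
  have hm : m < 0 := (hmin hx₀).trans_lt (div_neg_of_neg_of_pos hneg (hu_pos x₀ hx₀))
  have hge : ∀ x ∈ Icc a b, m * u x ≤ d x := fun x hx =>
    (le_div_iff₀ (hu_pos x hx)).mp (hmin hx)
  have hdr : d r = m * u r := (div_mul_cancel₀ _ (hu_pos r hr).ne').symm
  have hr' : r ∈ Ioo a b := by
    refine ⟨hr.1.lt_of_ne ?_, hr.2.lt_of_ne ?_⟩ <;> rintro rfl <;>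
      linarith [mul_neg_of_neg_of_pos hm (hu_pos _ hr)]
  refine ⟨m, hm, r, hr', hdr, ?_⟩
  filter_upwards [Icc_mem_nhds hr'.1 hr'.2] with x hx
  linarith [hge x hx]

/-- The radial equation `-(1/r) (r f')' = (c r - j / r²) f` at `x`, with `f'` the derivative of
`f`; for `j = k²` it is the equation of the `k`-th angular mode of `-Δ - c`. -/
structure IsRadialSolAt (c : ℝ → ℝ) (j : ℝ) (f f' : ℝ → ℝ) (x : ℝ) : Prop where
  hasDerivAt : HasDerivAt f (f' x) x
  hasDerivAt_flux : HasDerivAt (fun s => s * f' s) (-(x * ((c x - j / x ^ 2) * f x))) x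

namespace IsRadialSolAt

variable {c : ℝ → ℝ} {j x : ℝ} {f f' g g' : ℝ → ℝ}

theorem hasDerivAt_deriv (h : IsRadialSolAt c j f f' x) (hx : x ≠ 0) :
    HasDerivAt f' (-((c x - j / x ^ 2) * f x) - f' x / x) x := by
  have hquot := h.hasDerivAt_flux.div (hasDerivAt_id x) hx
  have heq : (fun s => s * f' s / id s) =ᶠ[𝓝 x] f' := by
    filter_upwards [eventually_ne_nhds hx] with s hs
    simp [mul_div_cancel_left₀ _ hs]
  refine (hquot.congr_of_eventuallyEq heq.symm).congr_deriv ?_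
  simp only [id]
  field_simp

theorem congr_of_eventuallyEq (h : IsRadialSolAt c j f f' x) (hg : g =ᶠ[𝓝 x] f)
    (hg' : g' =ᶠ[𝓝 x] f') : IsRadialSolAt c j g g' x where
  hasDerivAt := by
    rw [hg'.eq_of_nhds]
    exact h.hasDerivAt.congr_of_eventuallyEq hg
  hasDerivAt_flux := by
    rw [hg.eq_of_nhds]
    exact h.hasDerivAt_flux.congr_of_eventuallyEq (hg'.mono fun s hs => by simp only [hs])

theorem zero : IsRadialSolAt c j (fun _ => 0) (fun _ => 0) x where
  hasDerivAt := hasDerivAt_const x 0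
  hasDerivAt_flux := by simpa using hasDerivAt_const x (0 : ℝ)

theorem const_mul (h : IsRadialSolAt c j f f' x) (a : ℝ) :
    IsRadialSolAt c j (fun s => a * f s) (fun s => a * f' s) x where
  hasDerivAt := h.hasDerivAt.const_mul a
  hasDerivAt_flux := by
    rw [show (fun s => s * (a * f' s)) = fun s => a * (s * f' s) by ext; ring]
    exact (h.hasDerivAt_flux.const_mul a).congr_deriv (by ring)

theorem sub (hf : IsRadialSolAt c j f f' x) (hg : IsRadialSolAt c j g g' x) :
    IsRadialSolAt c j (fun s => f s - g s) (fun s => f' s - g' s) x where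
  hasDerivAt := hf.hasDerivAt.sub hg.hasDerivAt
  hasDerivAt_flux := by
    rw [show (fun s => s * (f' s - g' s)) = fun s => s * f' s - s * g' s by ext; ring]
    exact (hf.hasDerivAt_flux.sub hg.hasDerivAt_flux).congr_deriv (by ring)

theorem neg_deriv {u u' : ℝ → ℝ} (hu : IsRadialSolAt c 0 u u' x) (hx : x ≠ 0)
    (hc : ∀ᶠ s in 𝓝 x, c s = c x) :
    IsRadialSolAt c 1 (fun s => -u' s) (fun s => c s * u s + u' s / s) x where
  hasDerivAt := (hu.hasDerivAt_deriv hx).neg.congr_deriv (by ring)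
  hasDerivAt_flux := by
    have hflux : (fun s => s * (c s * u s + u' s / s)) =ᶠ[𝓝 x] fun s => c x * (s * u s) + u' s := by
      filter_upwards [hc, eventually_ne_nhds hx] with s hcs hs
      rw [hcs]
      field_simp
    refine ((((hasDerivAt_id x).mul hu.hasDerivAt).const_mul (c x)).add
      (hu.hasDerivAt_deriv hx)).congr_of_eventuallyEq hflux |>.congr_deriv ?_
    simp only [id]
    field_simp
    ring

/-- Reduction of order. -/
theorem mul_of_hasDerivAt {v v' W : ℝ → ℝ} (hv : IsRadialSolAt c j v v' x) (hx : x ≠ 0)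
    (hvx : v x ≠ 0) (hW : HasDerivAt W (1 / (x * v x ^ 2)) x) :
    IsRadialSolAt c j (fun s => v s * W s) (fun s => v' s * W s + 1 / (s * v s)) x where
  hasDerivAt := (hv.hasDerivAt.mul hW).congr_deriv (by field_simp)
  hasDerivAt_flux := by
    have h := (hv.hasDerivAt_flux.mul hW).add ((hasDerivAt_id x).mul
      ((hasDerivAt_const x (1 : ℝ)).div ((hasDerivAt_id x).mul hv.hasDerivAt)
        (mul_ne_zero hx hvx)))
    rw [show (fun s => s * (v' s * W s + 1 / (s * v s)))
        = fun s => s * v' s * W s + s * (1 / (s * v s)) by ext; ring]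
    refine h.congr_deriv ?_
    simp only [id, Pi.mul_apply, Pi.div_apply]
    field_simp
    ring

end IsRadialSolAt

/-- At a touching point the second derivative of `Φ - ψ - m u` is
`((j - j') Φ + j' m u) / x² < 0`. -/
theorem not_isLocalMin_of_isRadialSolAt {c : ℝ → ℝ} {j j' m x : ℝ} {Φ Φ' ψ ψ' u u' : ℝ → ℝ}
    (hΦ : ∀ᶠ s in 𝓝 x, IsRadialSolAt c j Φ Φ' s) (hψ : ∀ᶠ s in 𝓝 x, IsRadialSolAt c j' ψ ψ' s)
    (hu : ∀ᶠ s in 𝓝 x, IsRadialSolAt c 0 u u' s) (hx : x ≠ 0) (hj : j ≤ j') (hj' : 0 < j')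
    (hΦx : 0 ≤ Φ x) (hux : 0 < u x) (hm : m < 0) (hx_eq : Φ x - ψ x = m * u x) :
    ¬IsLocalMin (fun s => Φ s - ψ s - m * u s) x := by
  intro hmin
  have hderiv : ∀ᶠ s in 𝓝 x,
      HasDerivAt (fun s => Φ s - ψ s - m * u s) (Φ' s - ψ' s - m * u' s) s := by
    filter_upwards [hΦ, hψ, hu] with s hΦs hψs hus
    exact (hΦs.hasDerivAt.sub hψs.hasDerivAt).sub (hus.hasDerivAt.const_mul m)
  have hcrit : Φ' x - ψ' x - m * u' x = 0 := hmin.hasDerivAt_eq_zero hderiv.self_of_nhds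
  have hsecond := hmin.nonneg_of_hasDerivAt_deriv hderiv
    (((hΦ.self_of_nhds.hasDerivAt_deriv hx).sub (hψ.self_of_nhds.hasDerivAt_deriv hx)).sub
      ((hu.self_of_nhds.hasDerivAt_deriv hx).const_mul m))
  have hψx : ψ x = Φ x - m * u x := by linarith
  have hΦ'x : Φ' x = ψ' x + m * u' x := by linarith
  rw [hψx, hΦ'x] at hsecond
  have hval : (j - j') * Φ x + j' * (m * u x) < 0 := by
    nlinarith [mul_nonpos_of_nonpos_of_nonneg (sub_nonpos.2 hj) hΦx,
      mul_neg_of_pos_of_neg hj' (mul_neg_of_neg_of_pos hm hux)]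
  have hx2 : 0 < x ^ 2 := by positivity
  refine absurd hsecond (not_le.mpr ?_)
  calc _ = ((j - j') * Φ x + j' * (m * u x)) / x ^ 2 := by field_simp; ring
    _ < 0 := div_neg_of_neg_of_pos hval hx2

def radialCoeff (lam rs x : ℝ) : ℝ := lam + if x < rs then 1 else 0

theorem radialCoeff_eventually_eq {lam rs x : ℝ} (hx : x ≠ rs) :
    ∀ᶠ s in 𝓝 x, radialCoeff lam rs s = radialCoeff lam rs x := by
  rcases hx.lt_or_gt with hx | hx
  · filter_upwards [Iio_mem_nhds hx] with s (hs : s < rs)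
    simp [radialCoeff, hs, hx]
  · filter_upwards [Ioi_mem_nhds hx] with s (hs : rs < s)
    simp [radialCoeff, hs.not_gt, hx.not_gt]

namespace EigenProfile

variable {R rs lam x : ℝ} {u u' : ℝ → ℝ}

theorem hasDerivAt (hu : EigenProfile R rs lam u u') (hx : x ∈ Ioo 0 R) :
    HasDerivAt u (u' x) x :=
  (hu.deriv x (Ioo_subset_Icc_self hx)).hasDerivAt (Icc_mem_nhds hx.1 hx.2)

theorem isRadialSolAt (hu : EigenProfile R rs lam u u') (hx : x ∈ Ioo 0 R) (hne : x ≠ rs) :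
    IsRadialSolAt (radialCoeff lam rs) 0 u u' x :=
  ⟨hu.hasDerivAt hx, (hu.ode x hx hne).congr_deriv (by rw [zero_div, sub_zero]; rfl)⟩

theorem hasDerivWithinAt_deriv_Iio (hu : EigenProfile R rs lam u u') (hrs : 0 < rs)
    (hrsR : rs < R) : HasDerivWithinAt u' (-((lam + 1) * u rs) - u' rs / rs) (Iio rs) rs := by
  have hcont : ContinuousAt (fun y => -((lam + 1) * u y) - u' y / y) rs :=
    ((continuousAt_const.mul (hu.cont.continuousAt (Icc_mem_nhds hrs hrsR))).neg).sub
      ((hu.derivCont.continuousAt (Icc_mem_nhds hrs hrsR)).div continuousAt_id hrs.ne')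
  refine hasDerivWithinAt_Iio_of_tendsto (hu.derivCont.continuousAt (Icc_mem_nhds hrs hrsR)) ?_
    (hcont.tendsto.mono_left nhdsWithin_le_nhds)
  filter_upwards [Ioo_mem_nhdsLT hrs] with y hy
  refine ((hu.isRadialSolAt ⟨hy.1, hy.2.trans hrsR⟩ hy.2.ne).hasDerivAt_deriv
    hy.1.ne').congr_deriv ?_
  simp [radialCoeff, hy.2]

theorem hasDerivWithinAt_deriv_Ioi (hu : EigenProfile R rs lam u u') (hrs : 0 < rs)
    (hrsR : rs < R) : HasDerivWithinAt u' (-(lam * u rs) - u' rs / rs) (Ioi rs) rs := by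
  have hcont : ContinuousAt (fun y => -(lam * u y) - u' y / y) rs :=
    ((continuousAt_const.mul (hu.cont.continuousAt (Icc_mem_nhds hrs hrsR))).neg).sub
      ((hu.derivCont.continuousAt (Icc_mem_nhds hrs hrsR)).div continuousAt_id hrs.ne')
  refine hasDerivWithinAt_Ioi_of_tendsto (hu.derivCont.continuousAt (Icc_mem_nhds hrs hrsR)) ?_
    (hcont.tendsto.mono_left nhdsWithin_le_nhds)
  filter_upwards [Ioo_mem_nhdsGT hrsR] with y hy
  refine ((hu.isRadialSolAt ⟨hrs.trans hy.1, hy.2⟩ hy.1.ne').hasDerivAt_deriv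
    (hrs.trans hy.1).ne').congr_deriv ?_
  simp [radialCoeff, hy.1.not_gt]

end EigenProfile

theorem PsiProfile.isRadialSolAt {R rs lam x : ℝ} {u ψ ψ' : ℝ → ℝ} {k : ℕ} {dplus dminus : ℝ}
    (hψ : PsiProfile R rs lam u k ψ ψ' dplus dminus) (hx : x ∈ Ioo 0 R) (hne : x ≠ rs) :
    IsRadialSolAt (radialCoeff lam rs) ((k : ℝ) ^ 2) ψ ψ' x :=
  ⟨hψ.deriv x hx hne, hψ.ode x hx hne⟩

/-- A derivative jump below `-σ` at `r*` is a stronger point source than the one of `ψ_k`. -/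
structure IsSupersolution (R rs : ℝ) (c : ℝ → ℝ) (j σ : ℝ) (Φ Φ' : ℝ → ℝ) : Prop where
  cont : ContinuousOn Φ (Icc 0 R)
  nonneg : ∀ x ∈ Icc 0 R, 0 ≤ Φ x
  pos_right : 0 < Φ R
  isRadialSolAt : ∀ x ∈ Ioo 0 R, x ≠ rs → IsRadialSolAt c j Φ Φ' x
  jump : ∃ PL PR, HasDerivWithinAt Φ PL (Iio rs) rs ∧ HasDerivWithinAt Φ PR (Ioi rs) rs ∧
    PR - PL < -σ

theorem PsiProfile.le_of_isSupersolution {R rs lam j dplus dminus : ℝ} {k : ℕ}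
    {u u' ψ ψ' Φ Φ' : ℝ → ℝ} (hψ : PsiProfile R rs lam u k ψ ψ' dplus dminus)
    (hu : EigenProfile R rs lam u u') (hrs : 0 < rs) (hrsR : rs < R) (hk : 0 < k)
    (hj : j ≤ (k : ℝ) ^ 2) (hΦ : IsSupersolution R rs (radialCoeff lam rs) j (u rs) Φ Φ') :
    ψ rs ≤ Φ rs := by
  by_contra! hlt
  -- `Φ - ψ > 0` near `R`, where `u` vanishes; work on `[0, b]` instead
  obtain ⟨b, hb, hdb⟩ : ∃ b ∈ Ioo rs R, 0 < Φ b - ψ b := by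
    have hR : ContinuousWithinAt (fun x => Φ x - ψ x) (Ioo rs R) R :=
      ((hΦ.cont.sub hψ.cont) R ⟨(hrs.trans hrsR).le, le_rfl⟩).mono
        fun x hx => ⟨(hrs.trans hx.1).le, hx.2.le⟩
    have hpos : 0 < Φ R - ψ R := by rw [hψ.valR, sub_zero]; exact hΦ.pos_right
    have hev := (hR.eventually (lt_mem_nhds hpos)).and self_mem_nhdsWithin
    rw [nhdsWithin_Ioo_eq_nhdsLT hrsR] at hev
    obtain ⟨b, hdb, hb⟩ := hev.exists
    exact ⟨b, hb, hdb⟩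
  have hsub : Icc 0 b ⊆ Icc 0 R := Icc_subset_Icc le_rfl hb.2.le
  obtain ⟨m, hm, r, hr, hdr, hmin⟩ := exists_isLocalMin_sub_mul (d := fun x => Φ x - ψ x)
    ((hΦ.cont.sub hψ.cont).mono hsub) (hu.cont.mono hsub)
    (fun x hx => hu.pos x ⟨hx.1, hx.2.trans_lt hb.2⟩)
    (by rw [hψ.val0, sub_zero]; exact hΦ.nonneg 0 ⟨le_rfl, (hrs.trans hrsR).le⟩) hdb.le
    ⟨hrs.le, hb.1.le⟩ (sub_neg.2 hlt)
  have hrR : r ∈ Ioo 0 R := ⟨hr.1, hr.2.trans hb.2⟩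
  rcases eq_or_ne r rs with rfl | hne
  · obtain ⟨PL, PR, hPL, hPR, hjump⟩ := hΦ.jump
    have hmu := (hu.hasDerivAt hrR).const_mul m
    have := hmin.le_of_hasDerivWithinAt_Iio_Ioi ((hPL.sub hψ.jumpMinus).sub hmu.hasDerivWithinAt)
      ((hPR.sub hψ.jumpPlus).sub hmu.hasDerivWithinAt)
    linarith [hψ.jump]
  · have hnear : ∀ᶠ s in 𝓝 r, s ∈ Ioo 0 R ∧ s ≠ rs :=
      Filter.Eventually.and (Ioo_mem_nhds hrR.1 hrR.2) (eventually_ne_nhds hne)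
    have hk' : (0 : ℝ) < (k : ℝ) ^ 2 := by positivity
    exact not_isLocalMin_of_isRadialSolAt (hnear.mono fun s hs => hΦ.isRadialSolAt s hs.1 hs.2)
      (hnear.mono fun s hs => hψ.isRadialSolAt hs.1 hs.2)
      (hnear.mono fun s hs => hu.isRadialSolAt hs.1 hs.2) hr.1.ne' hj hk'
      (hΦ.nonneg r ⟨hr.1.le, hrR.2.le⟩) (hu.pos r ⟨hr.1.le, hrR.2⟩) hm hdr hmin

/-- `v · kinkWeight v rs` is the reduction-of-order solution that vanishes on `[0, r*]` and has a
kink at `r*`. -/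
def kinkWeight (v : ℝ → ℝ) (rs r : ℝ) : ℝ := ∫ t in rs..max rs r, 1 / (t * v t ^ 2)

section KinkWeight

variable {R rs : ℝ} {v : ℝ → ℝ}

theorem kinkWeight_of_le {r : ℝ} (hr : r ≤ rs) : kinkWeight v rs r = 0 := by
  simp [kinkWeight, max_eq_left hr]

theorem kinkWeight_of_ge {r : ℝ} (hr : rs ≤ r) :
    kinkWeight v rs r = ∫ t in rs..r, 1 / (t * v t ^ 2) := by
  simp [kinkWeight, max_eq_right hr]

theorem continuousOn_one_div_mul_sq (hv_cont : ContinuousOn v (Icc 0 R))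
    (hv_pos : ∀ x ∈ Ioc 0 R, 0 < v x) : ContinuousOn (fun t => 1 / (t * v t ^ 2)) (Ioc 0 R) :=
  continuousOn_const.div (continuousOn_id.mul ((hv_cont.mono Ioc_subset_Icc_self).pow 2))
    fun t ht => (mul_pos ht.1 (pow_pos (hv_pos t ht) 2)).ne'

theorem hasDerivAt_integral_one_div_mul_sq (hrs : 0 < rs) (hrsR : rs < R)
    (hv_cont : ContinuousOn v (Icc 0 R)) (hv_pos : ∀ x ∈ Ioc 0 R, 0 < v x) {x : ℝ}
    (hx : x ∈ Ioo 0 R) :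
    HasDerivAt (fun r => ∫ t in rs..r, 1 / (t * v t ^ 2)) (1 / (x * v x ^ 2)) x := by
  have hg := continuousOn_one_div_mul_sq hv_cont hv_pos
  refine intervalIntegral.integral_hasDerivAt_right ((hg.mono ?_).intervalIntegrable)
    ((hg.mono Ioo_subset_Ioc_self).stronglyMeasurableAtFilter isOpen_Ioo x hx)
    ((hg.mono Ioo_subset_Ioc_self).continuousAt (isOpen_Ioo.mem_nhds hx))
  exact fun t ht => ⟨(lt_min hrs hx.1).trans_le ht.1, ht.2.trans (max_le hrsR.le hx.2.le)⟩

theorem continuousOn_kinkWeight (hrs : 0 < rs) (hrsR : rs < R)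
    (hv_cont : ContinuousOn v (Icc 0 R)) (hv_pos : ∀ x ∈ Ioc 0 R, 0 < v x) :
    ContinuousOn (kinkWeight v rs) (Icc 0 R) := by
  have hsub : uIcc rs R ⊆ Ioc 0 R := by
    rw [uIcc_of_le hrsR.le]; exact fun t ht => ⟨hrs.trans_le ht.1, ht.2⟩
  have hprim := intervalIntegral.continuousOn_primitive_interval
    ((continuousOn_one_div_mul_sq hv_cont hv_pos).mono hsub
      |>.integrableOn_compact (μ := volume) isCompact_uIcc)
  refine hprim.comp (continuous_const.max continuous_id).continuousOn fun r hr => ?_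
  rw [uIcc_of_le hrsR.le]
  exact ⟨le_max_left _ _, max_le hrsR.le hr.2⟩

theorem kinkWeight_le (hrs : 0 < rs) (hrsR : rs < R)
    (hv_cont : ContinuousOn v (Icc 0 R)) (hv_pos : ∀ x ∈ Ioc 0 R, 0 < v x) {r : ℝ}
    (hr : r ∈ Icc 0 R) : kinkWeight v rs r ≤ kinkWeight v rs R := by
  have hg := continuousOn_one_div_mul_sq hv_cont hv_pos
  have hint : ∀ y ∈ Icc rs R, IntervalIntegrable (fun t => 1 / (t * v t ^ 2)) volume rs y :=
    fun y hy => (hg.mono fun t ht => ⟨hrs.trans_le (uIcc_of_le hy.1 ▸ ht).1,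
      (uIcc_of_le hy.1 ▸ ht).2.trans hy.2⟩).intervalIntegrable
  have hm : max rs r ∈ Icc rs R := ⟨le_max_left _ _, max_le hrsR.le hr.2⟩
  rw [← sub_nonneg, kinkWeight, kinkWeight, max_eq_right hrsR.le,
    intervalIntegral.integral_interval_sub_left (hint R ⟨hrsR.le, le_rfl⟩) (hint _ hm)]
  refine intervalIntegral.integral_nonneg hm.2 fun t ht => ?_
  have ht0 : 0 < t := hrs.trans_le (hm.1.trans ht.1)
  exact (one_div_pos.2 (mul_pos ht0 (pow_pos (hv_pos t ⟨ht0, ht.2⟩) 2))).le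

end KinkWeight

section KinkSolution

variable {c : ℝ → ℝ} {R rs j : ℝ} {v v' : ℝ → ℝ}

theorem IsRadialSolAt.mul_kinkWeight {x : ℝ} (hv : IsRadialSolAt c j v v' x) (hrs : 0 < rs)
    (hrsR : rs < R) (hv_cont : ContinuousOn v (Icc 0 R)) (hv_pos : ∀ x ∈ Ioc 0 R, 0 < v x)
    (hx : x ∈ Ioo 0 R) (hne : x ≠ rs) :
    IsRadialSolAt c j (fun s => v s * kinkWeight v rs s)
      (fun s => v' s * kinkWeight v rs s + if rs < s then 1 / (s * v s) else 0) x := by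
  rcases hne.lt_or_gt with hlt | hgt
  · refine IsRadialSolAt.zero.congr_of_eventuallyEq ?_ ?_ <;>
      filter_upwards [Iio_mem_nhds hlt] with s (hs : s < rs) <;>
      simp [kinkWeight_of_le hs.le, hs.not_gt]
  · refine (hv.mul_of_hasDerivAt hx.1.ne' (hv_pos x ⟨hx.1, hx.2.le⟩).ne'
      (hasDerivAt_integral_one_div_mul_sq hrs hrsR hv_cont hv_pos hx)).congr_of_eventuallyEq
      ?_ ?_ <;>
      filter_upwards [Ioi_mem_nhds hgt] with s (hs : rs < s) <;>
      simp [kinkWeight_of_ge hs.le, hs]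

theorem hasDerivWithinAt_mul_kinkWeight_Iio :
    HasDerivWithinAt (fun s => v s * kinkWeight v rs s) 0 (Iio rs) rs :=
  (hasDerivWithinAt_const rs _ (0 : ℝ)).congr
    (fun _ hs => by simp [kinkWeight_of_le (le_of_lt hs)]) (by simp [kinkWeight_of_le le_rfl])

theorem hasDerivWithinAt_mul_kinkWeight_Ioi {vR : ℝ} (hrs : 0 < rs) (hrsR : rs < R)
    (hv_cont : ContinuousOn v (Icc 0 R)) (hv_pos : ∀ x ∈ Ioc 0 R, 0 < v x)
    (hvR : HasDerivWithinAt v vR (Ioi rs) rs) :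
    HasDerivWithinAt (fun s => v s * kinkWeight v rs s) (1 / (rs * v rs)) (Ioi rs) rs := by
  have hW := (hasDerivAt_integral_one_div_mul_sq hrs hrsR hv_cont hv_pos
    ⟨hrs, hrsR⟩).hasDerivWithinAt (s := Ioi rs)
  refine ((hvR.mul hW).congr (fun _ hs => by simp [kinkWeight_of_ge (le_of_lt hs)])
    (by simp [kinkWeight_of_ge le_rfl])).congr_deriv ?_
  have hvrs := (hv_pos rs ⟨hrs, hrsR.le⟩).ne'
  simp only [intervalIntegral.integral_same, mul_zero, zero_add]
  field_simp

end KinkSolution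

/-- `Φ = (1 - ε) v - ε A w`, with `w = v · kinkWeight` the solution vanishing on `[0, r*]`:
`A` is chosen so that the kink of `w` at `r*` is `2σ`, and `ε` so that `Φ ≥ v / 2`. -/
theorem exists_isSupersolution {c : ℝ → ℝ} {R rs j σ vL vR : ℝ} {v v' : ℝ → ℝ}
    (hrs : 0 < rs) (hrsR : rs < R) (hv_cont : ContinuousOn v (Icc 0 R)) (hv0 : 0 ≤ v 0)
    (hv_pos : ∀ x ∈ Ioc 0 R, 0 < v x) (hv : ∀ x ∈ Ioo 0 R, x ≠ rs → IsRadialSolAt c j v v' x)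
    (hvL : HasDerivWithinAt v vL (Iio rs) rs) (hvR : HasDerivWithinAt v vR (Ioi rs) rs)
    (hjump : vR - vL = -σ) (hσ : 0 < σ) :
    ∃ Φ Φ', IsSupersolution R rs c j σ Φ Φ' ∧ Φ rs < v rs := by
  set W := kinkWeight v rs
  have hvrs : 0 < v rs := hv_pos rs ⟨hrs, hrsR.le⟩
  have hvR_pos : 0 < v R := hv_pos R ⟨hrs.trans hrsR, le_rfl⟩
  have hW_le : ∀ r ∈ Icc 0 R, W r ≤ W R := fun r hr => kinkWeight_le hrs hrsR hv_cont hv_pos hr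
  have hWrs : W rs = 0 := kinkWeight_of_le le_rfl
  have hWR : 0 ≤ W R :=
    (kinkWeight_of_le hrs.le).symm.trans_le (hW_le 0 ⟨le_rfl, (hrs.trans hrsR).le⟩)
  set A := 2 * σ * rs * v rs
  set ε := 1 / (2 * (1 + A * W R))
  have hA : 0 < A := by positivity
  have hε : 0 < ε := by positivity
  have hεW : ε * (1 + A * W R) = 1 / 2 := by simp only [ε]; field_simp
  refine ⟨fun r => (1 - ε) * v r - ε * A * (v r * W r),
    fun r => (1 - ε) * v' r - ε * A * (v' r * W r + if rs < r then 1 / (r * v r) else 0),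
    ⟨?_, fun r hr => ?_, ?_, fun x hx hne => ?_, ?_⟩, ?_⟩
  · exact (continuousOn_const.mul hv_cont).sub (continuousOn_const.mul
      (hv_cont.mul (continuousOn_kinkWeight hrs hrsR hv_cont hv_pos)))
  · have hvr : 0 ≤ v r := by
      rcases hr.1.eq_or_lt with h | h
      · exact h ▸ hv0
      · exact (hv_pos r ⟨h, hr.2⟩).le
    have hεr : ε * (1 + A * W r) ≤ 1 / 2 := hεW ▸ by gcongr; exact hW_le r hr
    calc 0 ≤ v r * (1 - ε * (1 + A * W r)) := mul_nonneg hvr (by linarith)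
      _ = _ := by ring
  · calc 0 < v R * (1 - ε * (1 + A * W R)) := by rw [hεW]; positivity
      _ = _ := by ring
  · exact ((hv x hx hne).const_mul (1 - ε)).sub
      (((hv x hx hne).mul_kinkWeight hrs hrsR hv_cont hv_pos hx hne).const_mul (ε * A))
  · refine ⟨_, _,
      (hvL.const_mul (1 - ε)).sub (hasDerivWithinAt_mul_kinkWeight_Iio.const_mul (ε * A)),
      (hvR.const_mul (1 - ε)).sub
        ((hasDerivWithinAt_mul_kinkWeight_Ioi hrs hrsR hv_cont hv_pos hvR).const_mul (ε * A)), ?_⟩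
    have hkink : ε * A * (1 / (rs * v rs)) = 2 * ε * σ := by simp only [A]; field_simp
    calc _ = (1 - ε) * (vR - vL) - ε * A * (1 / (rs * v rs)) := by ring
      _ = -σ - ε * σ := by rw [hjump, hkink]; ring
      _ < -σ := by linarith [mul_pos hε hσ]
  · show (1 - ε) * v rs - ε * A * (v rs * W rs) < v rs
    rw [hWrs]
    linarith [mul_pos hε hvrs]

theorem omega_k_uniformly_pos_general
    (R rs lam : ℝ) (hrs : 0 < rs) (hrsR : rs < R)
    (u u' : ℝ → ℝ) (hu : EigenProfile R rs lam u u') :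
    ∃ C > (0 : ℝ), ∀ k : ℕ, 1 ≤ k →
      ∀ (ψ ψ' : ℝ → ℝ) (dplus dminus : ℝ),
        PsiProfile R rs lam u k ψ ψ' dplus dminus →
        C ≤ -(u' rs) - ψ rs := by
  obtain ⟨Φ, Φ', hΦ, hΦrs⟩ := exists_isSupersolution (v := fun s => -u' s)
    (v' := fun s => radialCoeff lam rs s * u s + u' s / s) (σ := u rs) hrs hrsR
    hu.derivCont.neg (by simp [hu.deriv0]) (fun x hx => neg_pos.2 (hu.derivNeg x hx))
    (fun x hx hne => (hu.isRadialSolAt hx hne).neg_deriv hx.1.ne' (radialCoeff_eventually_eq hne))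
    (hu.hasDerivWithinAt_deriv_Iio hrs hrsR).neg (hu.hasDerivWithinAt_deriv_Ioi hrs hrsR).neg
    (by ring) (hu.pos rs ⟨hrs.le, hrsR⟩)
  refine ⟨-u' rs - Φ rs, sub_pos.2 hΦrs, fun k hk ψ ψ' dplus dminus hψ => ?_⟩
  have hψΦ := hψ.le_of_isSupersolution hu hrs hrsR hk (by exact_mod_cast Nat.one_le_pow 2 k hk) hΦ
  linarith

/-- there is `C > 0` such that `ω_k ≥ C` for every `k ≥ 1`,
where `ω_k = -u'(r*) - ψ_k(r*)`. -/
theorem omega_k_uniformly_pos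
    (R rs lam : ℝ) (hR : 0 < R) (hrs : 0 < rs) (hrsR : rs < R)
    (u u' : ℝ → ℝ) (hu : EigenProfile R rs lam u u') :
    ∃ C > (0 : ℝ), ∀ k : ℕ, 1 ≤ k →
      ∀ (ψ ψ' : ℝ → ℝ) (dplus dminus : ℝ),
        PsiProfile R rs lam u k ψ ψ' dplus dminus →
        C ≤ -(u' rs) - ψ rs :=
  omega_k_uniformly_pos_general R rs lam hrs hrsR u u' hu

end
end
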